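/- For every γ ∈ (0,2), setting Q = γ/2 + 2/γ, the function Υ(z) = exp( ∫₀^∞ ( (Q/2 − z)² e^{−t} − sinh²((Q/2 − z)t/2) / ( sinh(γt/4) sinh(t/γ) ) ) dt/t ) is holomorphic (complex differentiable) on the open strip { z ∈ ℂ : 0 < Re z < Q }. -/

import Mathlib

open MeasureTheory Set

/-- Zamolodchikov's special function `Υ_{γ/2}`, defined on the strip `0 < Re z < Q`
as the exponential of the convergent integral. -/
noncomputable def Upsilon (γ : ℝ) (z : ℂ) : ℂ :=
  Complex.exp (∫ t in Set.Ioi (0:ℝ),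
    ((((γ/2 + 2/γ : ℝ) : ℂ)/2 - z)^2 * Complex.exp (-(t:ℂ))
      - (Complex.sinh ((((γ/2 + 2/γ : ℝ) : ℂ)/2 - z) * t / 2))^2
        / (Complex.sinh ((γ:ℂ) * t / 4) * Complex.sinh ((t:ℂ) / γ))) / (t:ℂ))

/-!
In the variable `α = Q/2 - z` the integrand is entire for every `t > 0`, and near any point of
the strip `|Re α| < Q/2` it is dominated by `C e^{-μ t}`: as `t → 0` both `α² e^{-t}` and
`sinh²(αt/2) / (sinh(γt/4) sinh(t/γ))` equal `α²` up to `O(t)`, while for large `t` the second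
term is `O(e^{(|Re α| - Q/2) t})` because `γ/4 + 1/γ = Q/2`. A locally dominated family of
holomorphic functions has a holomorphic integral, Cauchy's estimate turning the bound on the
integrand into a bound on its derivative.
-/

open Filter Topology Metric

theorem aestronglyMeasurable_deriv_of_differentiableAt {𝕜 α E : Type*}
    [NontriviallyNormedField 𝕜] [MeasurableSpace α] {μ : Measure α}
    [NormedAddCommGroup E] [NormedSpace 𝕜 E] {F : 𝕜 → α → E} {z₀ : 𝕜}
    (hF_meas : ∀ z, AEStronglyMeasurable (F z) μ)
    (hF_diff : ∀ᵐ t ∂μ, DifferentiableAt 𝕜 (F · t) z₀) :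
    AEStronglyMeasurable (fun t ↦ deriv (F · t) z₀) μ := by
  obtain ⟨u, hu⟩ := (𝓝[≠] z₀).exists_seq_tendsto
  refine aestronglyMeasurable_of_tendsto_ae atTop (f := fun n t ↦ slope (F · t) z₀ (u n))
    (fun n ↦ ?_) (hF_diff.mono fun t ht ↦ (hasDerivAt_iff_tendsto_slope.1 ht.hasDerivAt).comp hu)
  simp only [slope_def_module]
  exact ((hF_meas _).sub (hF_meas _)).const_smul _

theorem differentiableOn_integral_of_locally_dominated {α E : Type*} [MeasurableSpace α]
    {μ : Measure α} [NormedAddCommGroup E] [NormedSpace ℂ E] [CompleteSpace E]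
    {F : ℂ → α → E} {U : Set ℂ} (hU : IsOpen U)
    (hF_meas : ∀ z, AEStronglyMeasurable (F z) μ)
    (hF_diff : ∀ᵐ t ∂μ, DifferentiableOn ℂ (F · t) U)
    (hF_dom : ∀ z ∈ U, ∃ s ∈ 𝓝 z, ∃ bound : α → ℝ, Integrable bound μ ∧
      ∀ᵐ t ∂μ, ∀ w ∈ s, ‖F w t‖ ≤ bound t) :
    DifferentiableOn ℂ (fun z ↦ ∫ t, F z t ∂μ) U := by
  intro z₀ hz₀
  obtain ⟨s, hs, bound, hbound_int, hbound⟩ := hF_dom z₀ hz₀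
  obtain ⟨ε, hε, hεs⟩ := Metric.mem_nhds_iff.1 (inter_mem hs (hU.mem_nhds hz₀))
  obtain ⟨R, hR, hRs⟩ : ∃ R > 0, ball z₀ (2 * R) ⊆ s ∩ U :=
    ⟨ε / 2, half_pos hε, by rwa [mul_div_cancel₀ _ two_ne_zero]⟩
  have hsub : ∀ w ∈ ball z₀ R, closedBall w R ⊆ s ∩ U := fun w hw x hx ↦ hRs <| by
    rw [mem_ball] at hw ⊢; rw [mem_closedBall] at hx
    linarith [dist_triangle x w z₀]
  -- Cauchy's estimate on circles of radius `R` turns the bound on `F` into one on its derivative.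
  have hderiv_bound : ∀ᵐ t ∂μ, ∀ w ∈ ball z₀ R, ‖deriv (F · t) w‖ ≤ bound t / R := by
    filter_upwards [hF_diff, hbound] with t hdiff hbd w hw
    refine Complex.norm_deriv_le_of_forall_mem_sphere_norm_le hR ?_ fun x hx ↦ hbd x ?_
    · refine (hdiff.mono ?_).diffContOnCl
      rw [closure_ball w hR.ne']
      exact fun x hx ↦ (hsub w hw hx).2
    · exact (hsub w hw (sphere_subset_closedBall hx)).1
  have hhasDeriv : ∀ᵐ t ∂μ, ∀ w ∈ ball z₀ R, HasDerivAt (F · t) (deriv (F · t) w) w := by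
    filter_upwards [hF_diff] with t hdiff w hw
    exact (hdiff.differentiableAt
      (hU.mem_nhds (hsub w hw (mem_closedBall_self hR.le)).2)).hasDerivAt
  have hF_int : Integrable (F z₀) μ := hbound_int.mono' (hF_meas z₀) <| by
    filter_upwards [hbound] with t ht using ht z₀ (mem_of_mem_nhds hs)
  exact (hasDerivAt_integral_of_dominated_loc_of_deriv_le (ball_mem_nhds z₀ hR)
    (Eventually.of_forall hF_meas) hF_int
    (aestronglyMeasurable_deriv_of_differentiableAt hF_meas
      (hhasDeriv.mono fun t ht ↦ (ht z₀ (mem_ball_self hR)).differentiableAt))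
    hderiv_bound (hbound_int.div_const R) hhasDeriv).2.differentiableAt.differentiableWithinAt

theorem Complex.norm_sinh_sub_self_le {w : ℂ} (hw : ‖w‖ ≤ 1) : ‖sinh w - w‖ ≤ ‖w‖ ^ 2 := by
  have h₁ := norm_exp_sub_one_sub_id_le hw
  have h₂ := norm_exp_sub_one_sub_id_le (x := -w) (by rwa [norm_neg])
  rw [norm_neg] at h₂
  calc ‖sinh w - w‖ = ‖(exp w - 1 - w) - (exp (-w) - 1 - -w)‖ / 2 := by
        rw [sinh, ← Complex.norm_two, ← norm_div]; congr 1; ring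
    _ ≤ (‖exp w - 1 - w‖ + ‖exp (-w) - 1 - -w‖) / 2 := by gcongr; exact norm_sub_le _ _
    _ ≤ ‖w‖ ^ 2 := by linarith

theorem Complex.norm_sinh_mul_sinh_sub_mul_le {a b : ℂ} (ha : ‖a‖ ≤ 1) (hb : ‖b‖ ≤ 1) :
    ‖sinh a * sinh b - a * b‖ ≤ ‖a‖ * ‖b‖ * (2 * ‖a‖ + ‖b‖) := by
  have hsinh_b : ‖sinh b‖ ≤ 2 * ‖b‖ := by
    calc ‖sinh b‖ ≤ ‖sinh b - b‖ + ‖b‖ := norm_le_norm_sub_add _ _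
      _ ≤ ‖b‖ ^ 2 + ‖b‖ := by gcongr; exact norm_sinh_sub_self_le hb
      _ ≤ 2 * ‖b‖ := by nlinarith [norm_nonneg b]
  calc ‖sinh a * sinh b - a * b‖ = ‖(sinh a - a) * sinh b + a * (sinh b - b)‖ := by ring_nf
    _ ≤ ‖sinh a - a‖ * ‖sinh b‖ + ‖a‖ * ‖sinh b - b‖ := by
        rw [← norm_mul, ← norm_mul]; exact norm_add_le _ _
    _ ≤ ‖a‖ ^ 2 * (2 * ‖b‖) + ‖a‖ * ‖b‖ ^ 2 := by
        gcongr
        exacts [norm_sinh_sub_self_le ha, norm_sinh_sub_self_le hb]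
    _ = ‖a‖ * ‖b‖ * (2 * ‖a‖ + ‖b‖) := by ring

theorem Complex.norm_sinh_le_exp_abs_re (w : ℂ) : ‖sinh w‖ ≤ Real.exp |w.re| := by
  have h₁ : ‖exp w‖ ≤ Real.exp |w.re| := by rw [norm_exp]; gcongr; exact le_abs_self _
  have h₂ : ‖exp (-w)‖ ≤ Real.exp |w.re| := by rw [norm_exp]; gcongr; exact neg_le_abs _
  calc ‖sinh w‖ = ‖exp w - exp (-w)‖ / 2 := by rw [sinh, norm_div, Complex.norm_two]
    _ ≤ (‖exp w‖ + ‖exp (-w)‖) / 2 := by gcongr; exact norm_sub_le _ _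
    _ ≤ Real.exp |w.re| := by linarith

theorem Complex.norm_exp_neg_ofReal_sub_one_le {t : ℝ} (ht : 0 ≤ t) : ‖exp (-(t : ℂ)) - 1‖ ≤ t := by
  rw [← ofReal_neg, ← ofReal_exp, ← ofReal_one, ← ofReal_sub, norm_real,
    Real.norm_eq_abs, abs_sub_comm,
    abs_of_nonneg (sub_nonneg.2 (Real.exp_le_one_iff.2 (by linarith)))]
  linarith [Real.add_one_le_exp (-t)]

theorem Real.sinh_mul_exp_sub_le_sinh {x₀ x : ℝ} (h : x₀ ≤ x) :
    sinh x₀ * exp (x - x₀) ≤ sinh x := by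
  have hexp : exp (-x) ≤ exp (x - 2 * x₀) := exp_le_exp.2 (by linarith)
  calc sinh x₀ * exp (x - x₀) = (exp x - exp (x - 2 * x₀)) / 2 := by
        rw [sinh_eq, div_mul_eq_mul_div, sub_mul, ← exp_add, ← exp_add]; ring_nf
    _ ≤ sinh x := by rw [sinh_eq]; linarith

noncomputable def upsilonDenom (γ t : ℝ) : ℂ :=
  Complex.sinh ((γ:ℂ) * t / 4) * Complex.sinh ((t:ℂ) / γ)

noncomputable def upsilonIntegrand (γ : ℝ) (α : ℂ) (t : ℝ) : ℂ :=
  (α ^ 2 * Complex.exp (-(t:ℂ)) - Complex.sinh (α * t / 2) ^ 2 / upsilonDenom γ t) / t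

theorem measurable_upsilonIntegrand (γ : ℝ) (α : ℂ) : Measurable (upsilonIntegrand γ α) := by
  unfold upsilonIntegrand upsilonDenom
  fun_prop

theorem differentiable_upsilonIntegrand (γ t : ℝ) : Differentiable ℂ (upsilonIntegrand γ · t) := by
  unfold upsilonIntegrand
  fun_prop

section
variable {γ : ℝ}

theorem upsilonDenom_eq_ofReal (t : ℝ) :
    upsilonDenom γ t = ((Real.sinh (γ * t / 4) * Real.sinh (t / γ) : ℝ) : ℂ) := by
  simp [upsilonDenom]

theorem norm_upsilonDenom (hγ : 0 < γ) {t : ℝ} (ht : 0 ≤ t) :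
    ‖upsilonDenom γ t‖ = Real.sinh (γ * t / 4) * Real.sinh (t / γ) := by
  rw [upsilonDenom_eq_ofReal, Complex.norm_of_nonneg]
  exact mul_nonneg (Real.sinh_nonneg_iff.2 (by positivity)) (Real.sinh_nonneg_iff.2 (by positivity))

theorem sq_div_four_le_norm_upsilonDenom (hγ : 0 < γ) {t : ℝ} (ht : 0 ≤ t) :
    t ^ 2 / 4 ≤ ‖upsilonDenom γ t‖ := by
  rw [norm_upsilonDenom hγ ht]
  calc t ^ 2 / 4 = (γ * t / 4) * (t / γ) := by field_simp
    _ ≤ Real.sinh (γ * t / 4) * Real.sinh (t / γ) :=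
        mul_le_mul (Real.self_le_sinh_iff.2 (by positivity))
          (Real.self_le_sinh_iff.2 (by positivity)) (by positivity)
          (Real.sinh_nonneg_iff.2 (by positivity))

theorem norm_upsilonDenom_sub_le (hγ : 0 < γ) {t : ℝ} (ht : 0 ≤ t) (htγ : t ≤ γ)
    (hγt : γ * t ≤ 4) :
    ‖upsilonDenom γ t - (t : ℂ) ^ 2 / 4‖ ≤ (γ / 2 + 1 / γ) * t ^ 3 / 4 := by
  have ha : ‖(γ : ℂ) * t / 4‖ = γ * t / 4 := by
    rw [show (γ : ℂ) * t / 4 = ((γ * t / 4 : ℝ) : ℂ) by push_cast; ring]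
    exact Complex.norm_of_nonneg (by positivity)
  have hb : ‖(t : ℂ) / γ‖ = t / γ := by
    rw [show (t : ℂ) / γ = ((t / γ : ℝ) : ℂ) by push_cast; ring]
    exact Complex.norm_of_nonneg (by positivity)
  have hab : (γ : ℂ) * t / 4 * (t / γ) = (t : ℂ) ^ 2 / 4 := by
    have : (γ : ℂ) ≠ 0 := by exact_mod_cast hγ.ne'
    field_simp
  have h := Complex.norm_sinh_mul_sinh_sub_mul_le (a := (γ : ℂ) * t / 4) (b := (t : ℂ) / γ)
    (by rw [ha]; linarith) (by rw [hb, div_le_one hγ]; exact htγ)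
  rw [hab, ha, hb] at h
  calc _ ≤ _ := h
    _ = (γ / 2 + 1 / γ) * t ^ 3 / 4 := by field_simp; ring

theorem norm_upsilonDenom_mul_exp_le (hγ : 0 < γ) {t₀ t : ℝ} (ht₀ : 0 ≤ t₀) (ht : t₀ ≤ t) :
    ‖upsilonDenom γ t₀‖ * Real.exp ((γ / 4 + 1 / γ) * (t - t₀)) ≤ ‖upsilonDenom γ t‖ := by
  have ht' : 0 ≤ t := ht₀.trans ht
  rw [norm_upsilonDenom hγ ht₀, norm_upsilonDenom hγ ht']
  calc _ = (Real.sinh (γ * t₀ / 4) * Real.exp (γ * t / 4 - γ * t₀ / 4))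
        * (Real.sinh (t₀ / γ) * Real.exp (t / γ - t₀ / γ)) := by
        rw [mul_mul_mul_comm, ← Real.exp_add]; ring_nf
    _ ≤ Real.sinh (γ * t / 4) * Real.sinh (t / γ) :=
        mul_le_mul (Real.sinh_mul_exp_sub_le_sinh (by gcongr))
          (Real.sinh_mul_exp_sub_le_sinh (by gcongr))
          (mul_nonneg (Real.sinh_nonneg_iff.2 (by positivity)) (Real.exp_pos _).le)
          (Real.sinh_nonneg_iff.2 (by positivity))

theorem norm_upsilonIntegrand_le_of_le (hγ : 0 < γ) {α : ℂ} {M t : ℝ} (hα : ‖α‖ ≤ M)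
    (ht : 0 < t) (htγ : t ≤ γ) (hγt : γ * t ≤ 4) (hMt : M * t ≤ 2) :
    ‖upsilonIntegrand γ α t‖ ≤ M ^ 2 * (1 + (γ / 2 + 1 / γ)) + 3 * M ^ 3 / 2 := by
  set D := upsilonDenom γ t
  set w := α * t / 2
  have hM : 0 ≤ M := (norm_nonneg α).trans hα
  have hD : t ^ 2 / 4 ≤ ‖D‖ := sq_div_four_le_norm_upsilonDenom hγ ht.le
  have hD₀ : D ≠ 0 := norm_pos_iff.1 ((by positivity : (0 : ℝ) < t ^ 2 / 4).trans_le hD)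
  have hw : ‖w‖ ≤ M * t / 2 := by
    rw [norm_div, norm_mul, Complex.norm_real, Real.norm_of_nonneg ht.le, Complex.norm_two]
    gcongr
  -- Both `sinh (α t / 2) ^ 2` and `α ^ 2 D` agree with `α ^ 2 t ^ 2 / 4` to third order in `t`.
  have hsplit : α ^ 2 * Complex.exp (-(t : ℂ)) - Complex.sinh w ^ 2 / D
      = α ^ 2 * (Complex.exp (-(t : ℂ)) - 1)
        + (α ^ 2 * (D - (t : ℂ) ^ 2 / 4) - (Complex.sinh w * Complex.sinh w - w * w)) / D := by
    field_simp
    ring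
  have hnum : ‖α ^ 2 * Complex.exp (-(t : ℂ)) - Complex.sinh w ^ 2 / D‖
      ≤ t * (M ^ 2 * (1 + (γ / 2 + 1 / γ)) + 3 * M ^ 3 / 2) := by
    rw [hsplit]
    calc _ ≤ ‖α‖ ^ 2 * ‖Complex.exp (-(t : ℂ)) - 1‖
          + (‖α‖ ^ 2 * ‖D - (t : ℂ) ^ 2 / 4‖ + ‖Complex.sinh w * Complex.sinh w - w * w‖)
            / ‖D‖ := by
          refine (norm_add_le _ _).trans ?_
          rw [norm_mul, norm_pow, norm_div]
          gcongr
          exact (norm_sub_le _ _).trans (by rw [norm_mul, norm_pow])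
      _ ≤ M ^ 2 * t + (M ^ 2 * ((γ / 2 + 1 / γ) * t ^ 3 / 4) + ‖w‖ * ‖w‖ * (2 * ‖w‖ + ‖w‖))
            / (t ^ 2 / 4) := by
          gcongr
          exacts [Complex.norm_exp_neg_ofReal_sub_one_le ht.le,
            norm_upsilonDenom_sub_le hγ ht.le htγ hγt,
            Complex.norm_sinh_mul_sinh_sub_mul_le (by linarith) (by linarith)]
      _ ≤ M ^ 2 * t + (M ^ 2 * ((γ / 2 + 1 / γ) * t ^ 3 / 4) + 3 * (M * t / 2) ^ 3)
            / (t ^ 2 / 4) := by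
          gcongr _ + (_ + ?_) / _
          calc ‖w‖ * ‖w‖ * (2 * ‖w‖ + ‖w‖) = 3 * ‖w‖ ^ 3 := by ring
            _ ≤ 3 * (M * t / 2) ^ 3 := by gcongr
      _ = t * (M ^ 2 * (1 + (γ / 2 + 1 / γ)) + 3 * M ^ 3 / 2) := by
          field_simp
          ring
  rw [upsilonIntegrand, norm_div, Complex.norm_real, Real.norm_of_nonneg ht.le, div_le_iff₀ ht]
  linarith

theorem norm_upsilonIntegrand_le_of_ge (hγ : 0 < γ) {α : ℂ} {M A μ t₀ t : ℝ} (hα : ‖α‖ ≤ M)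
    (hαre : |α.re| ≤ A) (hμ₁ : μ ≤ 1) (hμA : μ ≤ γ / 4 + 1 / γ - A) (ht₀ : 0 < t₀) (ht : t₀ ≤ t) :
    ‖upsilonIntegrand γ α t‖
      ≤ (M ^ 2 + Real.exp ((γ / 4 + 1 / γ) * t₀) / ‖upsilonDenom γ t₀‖) / t₀
        * Real.exp (-μ * t) := by
  set β := γ / 4 + 1 / γ
  set D₀ := ‖upsilonDenom γ t₀‖
  have htpos : 0 < t := ht₀.trans_le ht
  have hD₀ : 0 < D₀ := (by positivity : (0 : ℝ) < t₀ ^ 2 / 4).trans_le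
    (sq_div_four_le_norm_upsilonDenom hγ ht₀.le)
  have hsinh : ‖Complex.sinh (α * t / 2)‖ ^ 2 ≤ Real.exp (A * t) := by
    have hre : |(α * t / 2).re| ≤ A * (t / 2) := by
      rw [show α * t / 2 = α * ((t / 2 : ℝ) : ℂ) by push_cast; ring, Complex.re_mul_ofReal,
        abs_mul, abs_of_pos (by positivity : (0 : ℝ) < t / 2)]
      gcongr
    calc _ ≤ Real.exp (A * (t / 2)) ^ 2 := by
          gcongr
          exact (Complex.norm_sinh_le_exp_abs_re _).trans (Real.exp_le_exp.2 hre)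
      _ = Real.exp (A * t) := by rw [← Real.exp_nat_mul]; ring_nf
  have hnum : ‖α ^ 2 * Complex.exp (-(t : ℂ)) - Complex.sinh (α * t / 2) ^ 2 / upsilonDenom γ t‖
      ≤ (M ^ 2 + Real.exp (β * t₀) / D₀) * Real.exp (-μ * t) := by
    calc _ ≤ ‖α‖ ^ 2 * Real.exp (-t) + ‖Complex.sinh (α * t / 2)‖ ^ 2 / ‖upsilonDenom γ t‖ := by
          refine (norm_sub_le _ _).trans ?_
          rw [norm_mul, norm_div, norm_pow, norm_pow, ← Complex.ofReal_neg, Complex.norm_exp_ofReal]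
      _ ≤ M ^ 2 * Real.exp (-μ * t) + Real.exp (A * t) / (D₀ * Real.exp (β * (t - t₀))) := by
          gcongr
          · nlinarith
          · exact norm_upsilonDenom_mul_exp_le hγ ht₀.le ht
      _ ≤ M ^ 2 * Real.exp (-μ * t) + Real.exp (β * t₀) / D₀ * Real.exp (-μ * t) := by
          gcongr _ + ?_
          calc Real.exp (A * t) / (D₀ * Real.exp (β * (t - t₀)))
              = Real.exp (A * t - β * (t - t₀)) / D₀ := by rw [Real.exp_sub]; ring
            _ ≤ Real.exp (β * t₀ + -μ * t) / D₀ := by gcongr; nlinarith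
            _ = Real.exp (β * t₀) / D₀ * Real.exp (-μ * t) := by rw [Real.exp_add]; ring
      _ = (M ^ 2 + Real.exp (β * t₀) / D₀) * Real.exp (-μ * t) := by ring
  rw [upsilonIntegrand, norm_div, Complex.norm_real, Real.norm_of_nonneg htpos.le]
  calc _ ≤ (M ^ 2 + Real.exp (β * t₀) / D₀) * Real.exp (-μ * t) / t₀ :=
        div_le_div₀ (by positivity) hnum ht₀ ht
    _ = _ := by ring

theorem exists_norm_upsilonIntegrand_le_exp (hγ : 0 < γ) {M A : ℝ} (hM : 0 ≤ M)
    (hA : A < γ / 4 + 1 / γ) :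
    ∃ C μ : ℝ, 0 < μ ∧ ∀ α : ℂ, ‖α‖ ≤ M → |α.re| ≤ A → ∀ t > 0,
      ‖upsilonIntegrand γ α t‖ ≤ C * Real.exp (-μ * t) := by
  set t₀ := min (min γ (4 / γ)) (2 / (M + 1))
  set μ := min 1 (γ / 4 + 1 / γ - A)
  set C₀ := M ^ 2 * (1 + (γ / 2 + 1 / γ)) + 3 * M ^ 3 / 2
  set C₁ := (M ^ 2 + Real.exp ((γ / 4 + 1 / γ) * t₀) / ‖upsilonDenom γ t₀‖) / t₀
  have ht₀ : 0 < t₀ := by positivity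
  have hμ : 0 < μ := lt_min one_pos (by linarith)
  refine ⟨max (C₀ * Real.exp (μ * t₀)) C₁, μ, hμ, fun α hα hαre t ht ↦ ?_⟩
  rcases le_or_gt t t₀ with htt₀ | htt₀
  · have htγ : t ≤ γ := htt₀.trans ((min_le_left _ _).trans (min_le_left _ _))
    have hγt : γ * t ≤ 4 := by
      have : t ≤ 4 / γ := htt₀.trans ((min_le_left _ _).trans (min_le_right _ _))
      rwa [le_div_iff₀ hγ, mul_comm] at this
    have hMt : M * t ≤ 2 := by
      have : t ≤ 2 / (M + 1) := htt₀.trans (min_le_right _ _)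
      rw [le_div_iff₀ (by positivity)] at this
      nlinarith
    calc _ ≤ C₀ := norm_upsilonIntegrand_le_of_le hγ hα ht htγ hγt hMt
      _ ≤ C₀ * Real.exp (μ * t₀) * Real.exp (-μ * t) := by
          rw [mul_assoc, ← Real.exp_add]
          refine le_mul_of_one_le_right (by positivity) (Real.one_le_exp ?_)
          nlinarith
      _ ≤ _ := by gcongr; exact le_max_left _ _
  · calc _ ≤ C₁ * Real.exp (-μ * t) :=
          norm_upsilonIntegrand_le_of_ge hγ hα hαre (min_le_left _ _) (min_le_right _ _) ht₀ htt₀.le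
      _ ≤ _ := by gcongr; exact le_max_right _ _

theorem differentiableOn_integral_upsilonIntegrand (hγ : 0 < γ) :
    DifferentiableOn ℂ (fun α ↦ ∫ t in Ioi 0, upsilonIntegrand γ α t)
      {α | |α.re| < γ / 4 + 1 / γ} := by
  refine differentiableOn_integral_of_locally_dominated
    (isOpen_lt (continuous_abs.comp Complex.continuous_re) continuous_const)
    (fun α ↦ (measurable_upsilonIntegrand γ α).aestronglyMeasurable)
    (Eventually.of_forall fun t ↦ (differentiable_upsilonIntegrand γ t).differentiableOn)
    fun α₀ hα₀ ↦ ?_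
  obtain ⟨ε, hε, hεA⟩ : ∃ ε > 0, |α₀.re| + ε < γ / 4 + 1 / γ :=
    ⟨_, half_pos (sub_pos.2 hα₀), by linarith [show |α₀.re| < γ / 4 + 1 / γ from hα₀]⟩
  obtain ⟨C, μ, hμ, hC⟩ := exists_norm_upsilonIntegrand_le_exp hγ (M := ‖α₀‖ + ε)
    (A := |α₀.re| + ε) (by positivity) hεA
  refine ⟨ball α₀ ε, ball_mem_nhds α₀ hε, fun t ↦ C * Real.exp (-μ * t),
    (exp_neg_integrableOn_Ioi 0 hμ).const_mul C, ?_⟩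
  filter_upwards [ae_restrict_mem measurableSet_Ioi] with t ht α hα
  rw [mem_ball, dist_eq_norm] at hα
  refine hC α ?_ ?_ t ht
  · linarith [norm_le_norm_add_norm_sub' α α₀]
  · have := Complex.abs_re_le_norm (α - α₀)
    rw [Complex.sub_re] at this
    linarith [abs_sub_abs_le_abs_sub α.re α₀.re]

end

/-- For every `γ ∈ (0,2)`, the function `Υ` is holomorphic on the open
strip `{z : 0 < Re z < Q}`, where `Q = γ/2 + 2/γ`. -/
theorem upsilon_differentiableOn (γ : ℝ) (hγ : γ ∈ Set.Ioo (0:ℝ) 2) :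
    DifferentiableOn ℂ (Upsilon γ) {z : ℂ | 0 < z.re ∧ z.re < γ/2 + 2/γ} := by
  have hmaps : MapsTo (fun z : ℂ ↦ ((γ / 2 + 2 / γ : ℝ) : ℂ) / 2 - z)
      {z : ℂ | 0 < z.re ∧ z.re < γ/2 + 2/γ} {α | |α.re| < γ / 4 + 1 / γ} := by
    rintro z ⟨h₀, hQ⟩
    have hre : (((γ / 2 + 2 / γ : ℝ) : ℂ) / 2 - z).re = γ / 4 + 1 / γ - z.re := by
      simp only [Complex.sub_re, Complex.div_ofNat_re, Complex.ofReal_re]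
      ring
    change |(_ : ℂ).re| < _
    have hQ' : γ / 2 + 2 / γ = 2 * (γ / 4 + 1 / γ) := by ring
    rw [hre, abs_lt]
    constructor <;> linarith
  exact ((differentiableOn_integral_upsilonIntegrand hγ.1).comp
    ((differentiableOn_const _).sub differentiableOn_id) hmaps).cexp
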